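/- arXiv:2507.01898 — 9 statements merged into one kernel-verified Lean document; each statement's English description precedes it below -/
import Mathlib

section
/- For every integer n ≥ 6 with n ≡ 0 (mod 3), the Frobenius number of S(n) = ⟨f_n², f_{n+1}², f_{n+2}²⟩ equals (f_{n+3}/2 − 1)·f_{n+1}² + (f_{n−2} − 1)·f_{n+2}² − f_n²; that is, this integer does not belong to S(n) and every strictly larger integer belongs to S(n). (Note that f_{n+3} is even when 3 divides n.) -/
open Nat Finset

/-!
Write `n = k + 3` with `f_k = 2e` and `f_{k+1} = v`, so that `f_n = 2(e+v)`, `f_{n+1} = 4e+3v`,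
`f_{n+2} = 6e+5v`, `f_{n+3} = 2(5e+4v)` and `f_{n-2} = v`. The relations
`f_n² ∣ y f_{n+1}² + z f_{n+2}²` form the lattice spanned by `(5e+4v, -e)` and `(-(e+v), e+v)`.
The L-shaped region `[0, 5e+4v) × [0, v) ∪ [0, 4e+3v) × [v, e+v)` has `f_n²` points, no two of
which differ by a lattice vector, so `y f_{n+1}² + z f_{n+2}²` runs over all residues modulo `f_n²`
on it. Its largest value is at the corner `(5e+4v-1, v-1)`, and this value is the least element of
`S(n)` in its residue class: the lattice vectors leading from the corner back into `ℕ²` are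
nonnegative combinations of the two basis vectors, both of which raise the value. Hence the corner
value minus `f_n²` is the Frobenius number.
-/

/-- Membership of an integer in the numerical semigroup
`S(n) = ⟨fib n ^ 2, fib (n+1) ^ 2, fib (n+2) ^ 2⟩`. -/
def SZ (n : ℕ) : Set ℤ :=
  {x | ∃ a b c : ℕ, x = (a : ℤ) * (fib n : ℤ) ^ 2 + (b : ℤ) * (fib (n + 1) : ℤ) ^ 2 +
      (c : ℤ) * (fib (n + 2) : ℤ) ^ 2}

def natSpan3 (a b c : ℤ) : Set ℤ := {x | ∃ p q r : ℕ, x = p * a + q * b + r * c}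

section Apery

variable {a b c x₀ : ℤ}

theorem sub_notMem_natSpan3 (ha : 0 < a)
    (hmin : ∀ y z : ℕ, y * b + z * c ≡ x₀ [ZMOD a] → x₀ ≤ y * b + z * c) :
    x₀ - a ∉ natSpan3 a b c := by
  rintro ⟨p, q, r, h⟩
  have hle := hmin q r (Int.modEq_iff_dvd.mpr ⟨p + 1, by linear_combination h⟩)
  nlinarith [mul_nonneg (Nat.cast_nonneg (α := ℤ) p) ha.le]

theorem mem_natSpan3_of_lt (ha : 0 < a)
    (hcover : ∀ m : ℤ, ∃ y z : ℕ, y * b + z * c ≡ m [ZMOD a] ∧ y * b + z * c ≤ x₀)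
    {m : ℤ} (hm : x₀ - a < m) : m ∈ natSpan3 a b c := by
  obtain ⟨y, z, hmod, hle⟩ := hcover m
  obtain ⟨p, hp⟩ := Int.ModEq.dvd hmod
  have hp0 : 0 ≤ p := by
    by_contra! hneg
    nlinarith [mul_le_mul_of_nonneg_left (show p ≤ -1 by omega) ha.le]
  exact ⟨p.toNat, y, z, by rw [Int.toNat_of_nonneg hp0]; linear_combination hp⟩

end Apery

theorem exists_mem_intModEq_of_card_eq {α : Type*} (R : Finset α) (f : α → ℤ) {a : ℕ}
    (ha : a ≠ 0) (hcard : R.card = a)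
    (hinj : ∀ p ∈ R, ∀ q ∈ R, f p ≡ f q [ZMOD a] → p = q) (m : ℤ) :
    ∃ p ∈ R, f p ≡ m [ZMOD a] := by
  have : NeZero a := ⟨ha⟩
  have himage : R.image (fun p => (f p : ZMod a)) = univ := by
    apply eq_univ_of_card
    rw [Finset.card_image_of_injOn, hcard, ZMod.card]
    intro p hp q hq hpq
    exact hinj p hp q hq ((ZMod.intCast_eq_intCast_iff _ _ _).mp hpq)
  obtain ⟨p, hp, hpm⟩ := mem_image.mp (himage ▸ mem_univ (m : ZMod a))
  exact ⟨p, hp, (ZMod.intCast_eq_intCast_iff _ _ _).mp hpm⟩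

section Lattice

variable {e v : ℤ}

/-- `(5e+4v, -e)` and `(-(e+v), e+v)` span the lattice of relations: they lie in it and their
determinant `4(e+v)²` is its index, as `(4e+3v)²` is a unit modulo `4(e+v)²`. The coordinates
`s, t` are read off with the inverse matrix. -/
theorem exists_coords_of_modEq (hQ : e + v ≠ 0) (hcop : IsCoprime (2 * (e + v)) (4 * e + 3 * v))
    {y z y' z' : ℤ}
    (h : y * (4 * e + 3 * v) ^ 2 + z * (6 * e + 5 * v) ^ 2 ≡
      y' * (4 * e + 3 * v) ^ 2 + z' * (6 * e + 5 * v) ^ 2 [ZMOD (2 * (e + v)) ^ 2]) :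
    ∃ s t : ℤ, y - y' = s * (5 * e + 4 * v) - t * (e + v) ∧ z - z' = t * (e + v) - s * e := by
  set A := (2 * (e + v)) ^ 2
  set dy := y - y'
  set dz := z - z'
  have hd : A ∣ dy * (4 * e + 3 * v) ^ 2 + dz * (6 * e + 5 * v) ^ 2 := by
    convert Int.ModEq.dvd h.symm using 1
    ring
  have hcop2 : IsCoprime A ((4 * e + 3 * v) ^ 2) := hcop.pow
  obtain ⟨s, hs⟩ : A ∣ (dy + dz) * (e + v) := by
    refine hcop2.dvd_of_dvd_mul_right ?_
    have : (dy + dz) * (e + v) * (4 * e + 3 * v) ^ 2 =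
        (e + v) * (dy * (4 * e + 3 * v) ^ 2 + dz * (6 * e + 5 * v) ^ 2) -
          dz * (5 * e + 4 * v) * A := by
      ring
    rw [this]
    exact dvd_sub (hd.mul_left _) (dvd_mul_left _ _)
  obtain ⟨t, ht⟩ : A ∣ dy * e + dz * (5 * e + 4 * v) := by
    refine hcop2.dvd_of_dvd_mul_right ?_
    have : (dy * e + dz * (5 * e + 4 * v)) * (4 * e + 3 * v) ^ 2 =
        e * (dy * (4 * e + 3 * v) ^ 2 + dz * (6 * e + 5 * v) ^ 2) +
          dz * (11 * e + 9 * v) * A := by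
      ring
    rw [this]
    exact dvd_add (hd.mul_left _) (dvd_mul_left _ _)
  have hA : A ≠ 0 := pow_ne_zero 2 (mul_ne_zero two_ne_zero hQ)
  refine ⟨s, t, mul_right_cancel₀ hA ?_, mul_right_cancel₀ hA ?_⟩
  · linear_combination (5 * e + 4 * v) * hs - (e + v) * ht
  · linear_combination (e + v) * ht - e * hs

theorem coords_nonneg (he : 0 < e) (hv : 0 ≤ v) {s t : ℤ}
    (hy : 0 ≤ 5 * e + 4 * v - 1 + (s * (5 * e + 4 * v) - t * (e + v)))
    (hz : 0 ≤ v - 1 + (t * (e + v) - s * e)) : 0 ≤ s ∧ 0 ≤ t := by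
  have hs : -1 ≤ s := by
    by_contra! hs
    nlinarith [mul_le_mul_of_nonneg_right (show s ≤ -2 by omega)
      (show 0 ≤ 4 * (e + v) by omega)]
  have ht : 0 ≤ t := by
    by_contra! ht
    nlinarith [mul_le_mul_of_nonneg_right (show t ≤ -1 by omega) (show 0 ≤ e + v by omega)]
  refine ⟨?_, ht⟩
  by_contra! hs'
  nlinarith [mul_nonneg ht (show 0 ≤ e + v by omega)]

theorem corner_le_of_modEq (he : 0 < e) (hv : 0 ≤ v)
    (hcop : IsCoprime (2 * (e + v)) (4 * e + 3 * v)) {y z : ℤ} (hy : 0 ≤ y) (hz : 0 ≤ z)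
    (h : y * (4 * e + 3 * v) ^ 2 + z * (6 * e + 5 * v) ^ 2 ≡
      (5 * e + 4 * v - 1) * (4 * e + 3 * v) ^ 2 + (v - 1) * (6 * e + 5 * v) ^ 2
        [ZMOD (2 * (e + v)) ^ 2]) :
    (5 * e + 4 * v - 1) * (4 * e + 3 * v) ^ 2 + (v - 1) * (6 * e + 5 * v) ^ 2 ≤
      y * (4 * e + 3 * v) ^ 2 + z * (6 * e + 5 * v) ^ 2 := by
  obtain ⟨s, t, hs, ht⟩ := exists_coords_of_modEq (by omega) hcop h
  obtain ⟨hs0, ht0⟩ := coords_nonneg he hv (s := s) (t := t) (by linarith) (by linarith)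
  have hdiff : y * (4 * e + 3 * v) ^ 2 + z * (6 * e + 5 * v) ^ 2 -
      ((5 * e + 4 * v - 1) * (4 * e + 3 * v) ^ 2 + (v - 1) * (6 * e + 5 * v) ^ 2) =
      (s * (11 * e + 9 * v) + t * (5 * e + 4 * v)) * (2 * (e + v)) ^ 2 := by
    rw [show y = 5 * e + 4 * v - 1 + (s * (5 * e + 4 * v) - t * (e + v)) by linarith,
      show z = v - 1 + (t * (e + v) - s * e) by linarith]
    ring
  have : 0 ≤ (s * (11 * e + 9 * v) + t * (5 * e + 4 * v)) * (2 * (e + v)) ^ 2 := by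
    have := he.le; positivity
  linarith

theorem coords_eq_zero (hv : 0 < v) {s t dy dz : ℤ}
    (hdy : dy = s * (5 * e + 4 * v) - t * (e + v)) (hdz : dz = t * (e + v) - s * e)
    (hy : |dy| < 5 * e + 4 * v) (hz : |dz| < e + v)
    (hL : 4 * e + 3 * v ≤ dy → dz < v) (hL' : dy ≤ -(4 * e + 3 * v) → -v < dz) :
    s = 0 ∧ t = 0 := by
  wlog hs : 0 ≤ s generalizing s t dy dz
  · have := this (s := -s) (t := -t) (dy := -dy) (dz := -dz) (by linear_combination -hdy)
      (by linear_combination -hdz) (by rwa [abs_neg]) (by rwa [abs_neg])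
      (fun _ => by linarith [hL' (by linarith)]) (fun _ => by linarith [hL (by linarith)])
      (by omega)
    omega
  rw [abs_lt] at hy hz
  have hQ : 0 < e + v := by omega
  obtain rfl | hs1 := hs.eq_or_lt
  · refine ⟨rfl, ?_⟩
    rcases lt_trichotomy t 0 with ht | ht | ht
    · nlinarith [mul_le_mul_of_nonneg_right (show t ≤ -1 by omega) hQ.le]
    · exact ht
    · nlinarith [mul_le_mul_of_nonneg_right (show 1 ≤ t by omega) hQ.le]
  exfalso
  have ht1 : 1 ≤ t := by
    by_contra! ht
    nlinarith [mul_le_mul_of_nonneg_right (show t ≤ 0 by omega) hQ.le,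
      mul_le_mul_of_nonneg_right (show 1 ≤ s by omega) (show 0 ≤ 5 * e + 4 * v by omega)]
  obtain rfl : s = 1 := by
    by_contra hs2
    nlinarith [mul_le_mul_of_nonneg_right (show 2 ≤ s by omega) hQ.le]
  obtain rfl : t = 1 := by
    by_contra ht2
    nlinarith [mul_le_mul_of_nonneg_right (show 2 ≤ t by omega) hQ.le]
  -- `(dy, dz) = (4e+3v, v)` is the one difference ruled out by the notch of the L
  linarith [hL (by linarith)]

end Lattice

def lShape (e v : ℕ) : Finset (ℕ × ℕ) :=
  range (5 * e + 4 * v) ×ˢ range v ∪ range (4 * e + 3 * v) ×ˢ Ico v (e + v)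

theorem mem_lShape {e v : ℕ} {p : ℕ × ℕ} :
    p ∈ lShape e v ↔
      p.1 < 5 * e + 4 * v ∧ p.2 < e + v ∧ (v ≤ p.2 → p.1 < 4 * e + 3 * v) := by
  simp only [lShape, mem_union, mem_product, mem_range, mem_Ico]
  omega

theorem card_lShape (e v : ℕ) : (lShape e v).card = (2 * (e + v)) ^ 2 := by
  rw [lShape, card_union_of_disjoint, card_product, card_product, card_range, card_range,
    card_range, Nat.card_Ico, Nat.add_sub_cancel]
  · ring
  · rw [disjoint_left]
    simp only [mem_product, mem_range, mem_Ico]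
    omega

theorem lShape_le_corner {e v : ℕ} (hv : 2 * e ≤ v) {p : ℕ × ℕ} (hp : p ∈ lShape e v) :
    (p.1 : ℤ) * (4 * e + 3 * v) ^ 2 + p.2 * (6 * e + 5 * v) ^ 2 ≤
      (5 * e + 4 * v - 1) * (4 * e + 3 * v) ^ 2 + (v - 1) * (6 * e + 5 * v) ^ 2 := by
  obtain ⟨hy, hz, hL⟩ := mem_lShape.mp hp
  have hB : (0 : ℤ) ≤ (4 * e + 3 * v) ^ 2 := sq_nonneg _
  have hC : (0 : ℤ) ≤ (6 * e + 5 * v) ^ 2 := sq_nonneg _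
  by_cases hzv : v ≤ p.2
  · -- the top of the upper arm, `(4e+3v-1, e+v-1)`, is still below the corner
    have key : (e : ℤ) * (6 * e + 5 * v) ^ 2 ≤ (e + v) * (4 * e + 3 * v) ^ 2 := by
      obtain ⟨d, rfl⟩ := Nat.exists_eq_add_of_le hv
      rw [← sub_nonneg]
      push_cast
      ring_nf
      positivity
    have hy' : (p.1 : ℤ) ≤ 4 * e + 3 * v - 1 := by have := hL hzv; omega
    nlinarith [mul_le_mul_of_nonneg_right hy' hB,
      mul_le_mul_of_nonneg_right (show (p.2 : ℤ) ≤ e + v - 1 by omega) hC]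
  · nlinarith [mul_le_mul_of_nonneg_right (show (p.1 : ℤ) ≤ 5 * e + 4 * v - 1 by omega) hB,
      mul_le_mul_of_nonneg_right (show (p.2 : ℤ) ≤ v - 1 by omega) hC]

theorem lShape_eq_of_modEq {e v : ℕ} (hv : 0 < v)
    (hcop : IsCoprime (2 * (e + v) : ℤ) (4 * e + 3 * v)) {p q : ℕ × ℕ}
    (hp : p ∈ lShape e v) (hq : q ∈ lShape e v)
    (h : (p.1 : ℤ) * (4 * e + 3 * v) ^ 2 + p.2 * (6 * e + 5 * v) ^ 2 ≡
      q.1 * (4 * e + 3 * v) ^ 2 + q.2 * (6 * e + 5 * v) ^ 2 [ZMOD (2 * (e + v)) ^ 2]) :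
    p = q := by
  rw [mem_lShape] at hp hq
  obtain ⟨s, t, hs, ht⟩ := exists_coords_of_modEq (by omega) hcop h
  obtain ⟨rfl, rfl⟩ := coords_eq_zero (by exact_mod_cast hv) hs ht
    (abs_lt.mpr ⟨by omega, by omega⟩) (abs_lt.mpr ⟨by omega, by omega⟩)
    (by omega) (by omega)
  ext <;> omega

theorem lShape_cover {e v : ℕ} (he : 0 < e) (hv : 2 * e ≤ v)
    (hcop : IsCoprime (2 * (e + v) : ℤ) (4 * e + 3 * v)) (m : ℤ) :
    ∃ y z : ℕ,
      (y : ℤ) * (4 * e + 3 * v) ^ 2 + z * (6 * e + 5 * v) ^ 2 ≡ m [ZMOD (2 * (e + v)) ^ 2] ∧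
      (y : ℤ) * (4 * e + 3 * v) ^ 2 + z * (6 * e + 5 * v) ^ 2 ≤
        (5 * e + 4 * v - 1) * (4 * e + 3 * v) ^ 2 + (v - 1) * (6 * e + 5 * v) ^ 2 := by
  obtain ⟨p, hp, hpm⟩ := exists_mem_intModEq_of_card_eq (lShape e v)
    (fun p => (p.1 : ℤ) * (4 * e + 3 * v) ^ 2 + p.2 * (6 * e + 5 * v) ^ 2) (by positivity)
    (card_lShape e v) (fun p hp q hq h => lShape_eq_of_modEq (by omega) hcop hp hq
      (by exact_mod_cast h)) m
  exact ⟨p.1, p.2, by exact_mod_cast hpm, lShape_le_corner hv hp⟩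

theorem exists_fib_eq_of_three_dvd {n : ℕ} (hn : 6 ≤ n) (h3 : 3 ∣ n) :
    ∃ e v : ℕ, 0 < e ∧ 2 * e ≤ v ∧ fib (n - 2) = v ∧ fib n = 2 * (e + v) ∧
      fib (n + 1) = 4 * e + 3 * v ∧ fib (n + 2) = 6 * e + 5 * v ∧
      fib (n + 3) = 2 * (5 * e + 4 * v) := by
  obtain ⟨k, rfl⟩ : ∃ k, n = k + 3 := ⟨n - 3, by omega⟩
  obtain ⟨e, he⟩ : 2 ∣ fib k := Nat.fib_dvd 3 k (by omega)
  have hk : 0 < fib k := Nat.fib_pos.mpr (by omega)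
  refine ⟨e, fib (k + 1), by omega, he ▸ Nat.fib_le_fib_succ, rfl, ?_, ?_, ?_, ?_⟩ <;>
    simp [Nat.fib_add_two, he] <;> ring

theorem frobenius_Sn_of_three_dvd (n : ℕ) (hn : 6 ≤ n) (h3 : n % 3 = 0) :
    (((fib (n + 3) : ℤ) / 2 - 1) * (fib (n + 1) : ℤ) ^ 2 +
        ((fib (n - 2) : ℤ) - 1) * (fib (n + 2) : ℤ) ^ 2 - (fib n : ℤ) ^ 2) ∉ SZ n ∧
    ∀ m : ℤ,
      (((fib (n + 3) : ℤ) / 2 - 1) * (fib (n + 1) : ℤ) ^ 2 +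
        ((fib (n - 2) : ℤ) - 1) * (fib (n + 2) : ℤ) ^ 2 - (fib n : ℤ) ^ 2) < m →
      m ∈ SZ n := by
  obtain ⟨e, v, he, hv, hfv, hf₀, hf₁, hf₂, hf₃⟩ :=
    exists_fib_eq_of_three_dvd hn (Nat.dvd_of_mod_eq_zero h3)
  have hcop : IsCoprime (2 * (e + v) : ℤ) (4 * e + 3 * v) := by
    have := Nat.isCoprime_iff_coprime.mpr (Nat.fib_coprime_fib_succ n)
    rw [hf₀, hf₁] at this
    exact_mod_cast this
  have hS :
      SZ n = natSpan3 ((2 * (e + v) : ℤ) ^ 2) ((4 * e + 3 * v) ^ 2) ((6 * e + 5 * v) ^ 2) := by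
    rw [SZ, natSpan3, hf₀, hf₁, hf₂]
    push_cast
    rfl
  have hF : ((fib (n + 3) : ℤ) / 2 - 1) * (fib (n + 1) : ℤ) ^ 2 +
        ((fib (n - 2) : ℤ) - 1) * (fib (n + 2) : ℤ) ^ 2 - (fib n : ℤ) ^ 2 =
      (5 * e + 4 * v - 1) * (4 * e + 3 * v) ^ 2 + (v - 1) * (6 * e + 5 * v) ^ 2 -
        (2 * (e + v) : ℤ) ^ 2 := by
    rw [hfv, hf₀, hf₁, hf₂, hf₃]
    push_cast
    rw [Int.mul_ediv_cancel_left _ two_ne_zero]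
  rw [hS, hF]
  exact ⟨sub_notMem_natSpan3 (by positivity) fun y z h =>
      corner_le_of_modEq (by exact_mod_cast he) (by positivity) hcop (by positivity)
        (by positivity) h,
    fun m hm => mem_natSpan3_of_lt (by positivity) (lShape_cover he hv hcop) hm⟩
end

section
/- For every integer n ≥ 6 with n ≡ 0 (mod 3), the set of pseudo-Frobenius numbers of S(n) = ⟨f_n², f_{n+1}², f_{n+2}²⟩ is exactly the two-element set { (f_{n+1} − 1)·f_{n+1}² + (f_n/2 − 1)·f_{n+2}² − f_n² , (f_{n+3}/2 − 1)·f_{n+1}² + (f_{n−2} − 1)·f_{n+2}² − f_n² }. -/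
/-!
Write `fib n = 2e` and `fib (n - 3) = 2d`; then `fib (n + 1) = 3e + d` and
`fib (n + 2) = 5e + d`, so `S(n)` is generated by `A = (2e)²`, `B = (3e + d)²` and
`C = (5e + d)²`. The relations `e C = e B + (4e + d) A`, `(4e + d) B = d C + (9e + 2d) A` and
`(3e + d) B + (e - d) C = (13e + 3d) A` rewrite every `β B + γ C` as `y B + z C + k A` with
`(y, z)` in the L-shaped region `[0, 3e + d) × [0, e) ∪ [3e + d, 4e + d) × [0, e - d)`.
The region has `A` points and `B` is a unit modulo `A`, so it meets every residue class
modulo `A` exactly once: the elements `y B + z C` form the Apéry set of `S(n)` with respect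
to `A`. The pseudo-Frobenius numbers are then `w - A` for the elements `w` of the Apéry set
that are maximal for the order of `S(n)`, namely the two outer corners of the region.
-/

open Nat

/-- `x` is a pseudo-Frobenius number of `S(n)`. -/
def IsPF (n : ℕ) (x : ℤ) : Prop :=
  x ∉ SZ n ∧ ∀ s ∈ SZ n, s ≠ 0 → x + s ∈ SZ n

def natSpan (a b c : ℤ) : AddSubmonoid ℤ where
  carrier := {x | ∃ α β γ : ℕ, x = α * a + β * b + γ * c}
  add_mem' := by
    rintro _ _ ⟨α, β, γ, rfl⟩ ⟨α', β', γ', rfl⟩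
    exact ⟨α + α', β + β', γ + γ', by push_cast; ring⟩
  zero_mem' := ⟨0, 0, 0, by simp⟩

def IsPseudoFrobenius (S : AddSubmonoid ℤ) (x : ℤ) : Prop :=
  x ∉ S ∧ ∀ s ∈ S, s ≠ 0 → x + s ∈ S

namespace natSpan

variable {a b c x : ℤ}

theorem mem_of_nonneg (α β γ : ℤ) (hα : 0 ≤ α) (hβ : 0 ≤ β) (hγ : 0 ≤ γ)
    (hx : x = α * a + β * b + γ * c) : x ∈ natSpan a b c :=
  ⟨α.toNat, β.toNat, γ.toNat, by simp [hx, hα, hβ, hγ]⟩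

theorem sub_mem_of_ne_zero {s : ℤ} (hs : s ∈ natSpan a b c) (h0 : s ≠ 0) :
    s - a ∈ natSpan a b c ∨ s - b ∈ natSpan a b c ∨ s - c ∈ natSpan a b c := by
  obtain ⟨α, β, γ, rfl⟩ := hs
  rcases α with _ | α
  · rcases β with _ | β
    · rcases γ with _ | γ
      · simp at h0
      · exact .inr (.inr ⟨0, 0, γ, by push_cast; ring⟩)
    · exact .inr (.inl ⟨0, β, γ, by push_cast; ring⟩)
  · exact .inl ⟨α, β, γ, by push_cast; ring⟩

theorem isPseudoFrobenius_iff (ha : a ≠ 0) (hb : b ≠ 0) (hc : c ≠ 0) :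
    IsPseudoFrobenius (natSpan a b c) x ↔ x ∉ natSpan a b c ∧
      x + a ∈ natSpan a b c ∧ x + b ∈ natSpan a b c ∧ x + c ∈ natSpan a b c := by
  have ha' : a ∈ natSpan a b c := ⟨1, 0, 0, by ring⟩
  have hb' : b ∈ natSpan a b c := ⟨0, 1, 0, by ring⟩
  have hc' : c ∈ natSpan a b c := ⟨0, 0, 1, by ring⟩
  refine ⟨fun ⟨hx, h⟩ ↦ ⟨hx, h a ha' ha, h b hb' hb, h c hc' hc⟩, ?_⟩
  rintro ⟨hx, hxa, hxb, hxc⟩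
  refine ⟨hx, fun s hs h0 ↦ ?_⟩
  rcases sub_mem_of_ne_zero hs h0 with h | h | h
  · simpa using add_mem hxa h
  · simpa using add_mem hxb h
  · simpa using add_mem hxc h

end natSpan

namespace FibSquares

def A (e : ℕ) : ℤ := (2 * e) ^ 2
def B (e d : ℕ) : ℤ := (3 * e + d) ^ 2
def C (e d : ℕ) : ℤ := (5 * e + d) ^ 2

def S (e d : ℕ) : AddSubmonoid ℤ := natSpan (A e) (B e d) (C e d)

def aperyRegion (e d : ℕ) : Finset (ℕ × ℕ) :=
  Finset.range (3 * e + d) ×ˢ Finset.range e ∪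
    Finset.Ico (3 * e + d) (4 * e + d) ×ˢ Finset.range (e - d)

def aperyElem (e d : ℕ) (p : ℕ × ℕ) : ℤ := p.1 * B e d + p.2 * C e d

variable {e d : ℕ}

theorem mem_aperyRegion {p : ℕ × ℕ} : p ∈ aperyRegion e d ↔
    p.1 < 3 * e + d ∧ p.2 < e ∨ 3 * e + d ≤ p.1 ∧ p.1 < 4 * e + d ∧ p.2 < e - d := by
  simp [aperyRegion, and_assoc]

theorem card_aperyRegion (hde : d ≤ e) : (aperyRegion e d).card = (2 * e) ^ 2 := by
  rw [aperyRegion, Finset.card_union_of_disjoint]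
  · rw [Finset.card_product, Finset.card_product, Finset.card_range, Finset.card_range,
      Finset.card_range, Nat.card_Ico, show 4 * e + d - (3 * e + d) = e by omega]
    zify [hde]
    ring
  · refine Finset.disjoint_left.mpr fun p h₁ h₂ ↦ ?_
    simp only [Finset.mem_product, Finset.mem_range, Finset.mem_Ico] at h₁ h₂
    omega

theorem pos_A (he : 0 < e) : 0 < A e := by unfold A; positivity
theorem B_ne_zero (he : 0 < e) : B e d ≠ 0 := by unfold B; positivity
theorem C_ne_zero (he : 0 < e) : C e d ≠ 0 := by unfold C; positivity

theorem cast_A_eq_zero : ((A e : ℤ) : ZMod ((2 * e) ^ 2)) = 0 := by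
  rw [A]
  exact_mod_cast ZMod.natCast_self ((2 * e) ^ 2)

theorem exists_reduce_step (hde : d < e) {β γ : ℕ} (h : (β, γ) ∉ aperyRegion e d) :
    ∃ β' γ' k : ℕ, β' + 2 * γ' < β + 2 * γ ∧
      β * B e d + γ * C e d = β' * B e d + γ' * C e d + k * A e := by
  rw [mem_aperyRegion] at h
  simp only [not_or, not_and, not_lt] at h
  by_cases hγ : e ≤ γ
  · obtain ⟨γ', rfl⟩ := Nat.exists_eq_add_of_le' hγ
    refine ⟨β + e, γ', 4 * e + d, by omega, ?_⟩
    simp only [A, B, C]; push_cast; ring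
  by_cases hβ : 4 * e + d ≤ β
  · obtain ⟨β', rfl⟩ := Nat.exists_eq_add_of_le' hβ
    refine ⟨β', γ + d, 9 * e + 2 * d, by omega, ?_⟩
    simp only [A, B, C]; push_cast; ring
  · obtain ⟨β', rfl⟩ : ∃ β', β = β' + (3 * e + d) := ⟨β - (3 * e + d), by omega⟩
    obtain ⟨γ', rfl⟩ : ∃ γ', γ = γ' + (e - d) := ⟨γ - (e - d), by omega⟩
    refine ⟨β', γ', 13 * e + 3 * d, by omega, ?_⟩
    simp only [A, B, C]; push_cast [hde.le]; ring

theorem exists_mem_aperyRegion (hde : d < e) (β γ : ℕ) :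
    ∃ p ∈ aperyRegion e d, ∃ k : ℕ,
      β * B e d + γ * C e d = aperyElem e d p + k * A e := by
  induction h : β + 2 * γ using Nat.strong_induction_on generalizing β γ with
  | _ N ih =>
  by_cases hp : (β, γ) ∈ aperyRegion e d
  · exact ⟨_, hp, 0, by simp [aperyElem]⟩
  obtain ⟨β', γ', k, hlt, heq⟩ := exists_reduce_step hde hp
  obtain ⟨p, hp, k', heq'⟩ := ih _ (h ▸ hlt) β' γ' rfl
  exact ⟨p, hp, k + k', by rw [heq, heq']; push_cast; ring⟩

theorem mem_S_iff (hde : d < e) {x : ℤ} :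
    x ∈ S e d ↔ ∃ p ∈ aperyRegion e d, ∃ k : ℕ, x = aperyElem e d p + k * A e := by
  constructor
  · rintro ⟨α, β, γ, rfl⟩
    obtain ⟨p, hp, k, heq⟩ := exists_mem_aperyRegion hde β γ
    exact ⟨p, hp, α + k, by push_cast; linarith⟩
  · rintro ⟨p, -, k, rfl⟩
    exact ⟨k, p.1, p.2, by simp only [aperyElem]; ring⟩

theorem injOn_aperyElem (hde : d < e) (hcop : Coprime (2 * e) (3 * e + d)) :
    Set.InjOn (fun p ↦ (aperyElem e d p : ZMod ((2 * e) ^ 2))) (aperyRegion e d) := by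
  have : NeZero ((2 * e) ^ 2) := ⟨pow_ne_zero 2 (by omega)⟩
  let u := ZMod.unitOfCoprime _ (hcop.symm.pow 2 2)
  refine Finset.injOn_of_surjOn_of_card_le _ (t := Finset.univ) (by simp [Set.MapsTo])
    (fun r _ ↦ ?_) (by rw [card_aperyRegion hde.le, Finset.card_univ, ZMod.card])
  obtain ⟨p, hp, k, heq⟩ := exists_mem_aperyRegion hde (r * ↑u⁻¹).val 0
  refine ⟨p, hp, ?_⟩
  have hB : ((B e d : ℤ) : ZMod ((2 * e) ^ 2)) = u := by simp [B, u]
  simpa [hB, cast_A_eq_zero] using (congrArg (Int.cast : ℤ → ZMod ((2 * e) ^ 2)) heq).symm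

theorem aperyElem_sub_A_notMem (hde : d < e) (hcop : Coprime (2 * e) (3 * e + d))
    {p : ℕ × ℕ} (hp : p ∈ aperyRegion e d) : aperyElem e d p - A e ∉ S e d := by
  intro h
  obtain ⟨p', hp', k, heq⟩ := (mem_S_iff hde).mp h
  replace heq : aperyElem e d p = aperyElem e d p' + (k + 1) * A e := by linarith
  obtain rfl : p = p' := injOn_aperyElem hde hcop hp hp' <| by simp [heq, cast_A_eq_zero]
  nlinarith [pos_A (by omega : 0 < e)]

theorem aperyRegion_step {p : ℕ × ℕ} (hp : p ∈ aperyRegion e d) :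
    (p.1 + 1, p.2) ∈ aperyRegion e d ∨ (p.1, p.2 + 1) ∈ aperyRegion e d ∨
      p = (3 * e + d - 1, e - 1) ∨ p = (4 * e + d - 1, e - d - 1) := by
  obtain ⟨y, z⟩ := p
  simp only [mem_aperyRegion, Prod.mk.injEq] at hp ⊢
  omega

theorem isPseudoFrobenius_aperyElem_sub_A_iff (hde : d < e) (hcop : Coprime (2 * e) (3 * e + d))
    {p : ℕ × ℕ} (hp : p ∈ aperyRegion e d) :
    IsPseudoFrobenius (S e d) (aperyElem e d p - A e) ↔
      aperyElem e d p - A e + B e d ∈ S e d ∧ aperyElem e d p - A e + C e d ∈ S e d := by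
  have he : 0 < e := by omega
  rw [S, natSpan.isPseudoFrobenius_iff (pos_A he).ne' (B_ne_zero he) (C_ne_zero he)]
  have hA : aperyElem e d p - A e + A e ∈ natSpan (A e) (B e d) (C e d) :=
    ⟨0, p.1, p.2, by simp [aperyElem]⟩
  simp only [hA, true_and]
  exact and_iff_right (aperyElem_sub_A_notMem hde hcop hp)

theorem aperyElem_corner₁ (he : 0 < e) :
    aperyElem e d (3 * e + d - 1, e - 1) = (3 * e + d - 1) * B e d + (e - 1) * C e d := by
  simp only [aperyElem]
  rw [Nat.cast_sub (by omega), Nat.cast_sub he]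
  push_cast; ring

theorem aperyElem_corner₂ (hde : d < e) :
    aperyElem e d (4 * e + d - 1, e - d - 1) =
      (4 * e + d - 1) * B e d + (e - d - 1) * C e d := by
  simp only [aperyElem]
  rw [Nat.cast_sub (by omega), Nat.cast_sub (by omega), Nat.cast_sub hde.le]
  push_cast; ring

theorem setOf_isPseudoFrobenius (hd : 0 < d) (hde : d < e)
    (hcop : Coprime (2 * e) (3 * e + d)) :
    {x | IsPseudoFrobenius (S e d) x} =
      {(3 * e + d - 1) * B e d + (e - 1) * C e d - A e,
        (4 * e + d - 1) * B e d + (e - d - 1) * C e d - A e} := by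
  have he : 0 < e := by omega
  ext x
  simp only [Set.mem_ofPred_eq, Set.mem_insert_iff, Set.mem_singleton_iff]
  constructor
  · intro hx
    obtain ⟨p, hp, k, hxp⟩ :=
      (mem_S_iff hde).mp (hx.2 (A e) ⟨1, 0, 0, by ring⟩ (pos_A he).ne')
    obtain rfl : k = 0 := by
      rcases k with _ | k
      · rfl
      · exact absurd ((mem_S_iff hde).mpr ⟨p, hp, k, by push_cast at hxp; linarith⟩) hx.1
    obtain rfl : x = aperyElem e d p - A e := by push_cast at hxp; linarith
    rw [isPseudoFrobenius_aperyElem_sub_A_iff hde hcop hp] at hx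
    rcases aperyRegion_step hp with h | h | rfl | rfl
    · refine absurd ?_ (aperyElem_sub_A_notMem hde hcop h)
      convert hx.1 using 1; simp only [aperyElem]; push_cast; ring
    · refine absurd ?_ (aperyElem_sub_A_notMem hde hcop h)
      convert hx.2 using 1; simp only [aperyElem]; push_cast; ring
    · exact .inl (by rw [aperyElem_corner₁ he])
    · exact .inr (by rw [aperyElem_corner₂ hde])
  · rintro (rfl | rfl)
    · rw [← aperyElem_corner₁ he, isPseudoFrobenius_aperyElem_sub_A_iff hde hcop
        (by simp only [mem_aperyRegion]; omega), aperyElem_corner₁ he]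
      exact ⟨natSpan.mem_of_nonneg (13 * e + 3 * d - 1) 0 (d - 1) (by omega) le_rfl (by omega)
          (by simp only [A, B, C]; ring),
        natSpan.mem_of_nonneg (4 * e + d - 1) (4 * e + d - 1) 0 (by omega) (by omega) le_rfl
          (by simp only [A, B, C]; ring)⟩
    · rw [← aperyElem_corner₂ hde, isPseudoFrobenius_aperyElem_sub_A_iff hde hcop
        (by simp only [mem_aperyRegion]; omega), aperyElem_corner₂ hde]
      exact ⟨natSpan.mem_of_nonneg (9 * e + 2 * d - 1) 0 (e - 1) (by omega) le_rfl (by omega)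
          (by simp only [A, B, C]; ring),
        natSpan.mem_of_nonneg (13 * e + 3 * d - 1) (e - 1) 0 (by omega) (by omega) le_rfl
          (by simp only [A, B, C]; ring)⟩

end FibSquares

theorem fib_eq_of_fib_eq_two_mul {m e d : ℕ} (he : fib (m + 3) = 2 * e) (hd : fib m = 2 * d) :
    fib (m + 1) + d = e ∧ fib (m + 4) = 3 * e + d ∧ fib (m + 5) = 5 * e + d ∧
      fib (m + 6) = 8 * e + 2 * d := by
  have h2 : fib (m + 2) = fib m + fib (m + 1) := fib_add_two
  have h3 : fib (m + 3) = fib (m + 1) + fib (m + 2) := fib_add_two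
  have h4 : fib (m + 4) = fib (m + 2) + fib (m + 3) := fib_add_two
  have h5 : fib (m + 5) = fib (m + 3) + fib (m + 4) := fib_add_two
  have h6 : fib (m + 6) = fib (m + 4) + fib (m + 5) := fib_add_two
  omega

open FibSquares in
theorem pseudoFrobenius_Sn_of_three_dvd (n : ℕ) (hn : 6 ≤ n) (h3 : n % 3 = 0) :
    {x : ℤ | IsPF n x} =
      {((fib (n + 1) : ℤ) - 1) * (fib (n + 1) : ℤ) ^ 2 +
          ((fib n : ℤ) / 2 - 1) * (fib (n + 2) : ℤ) ^ 2 - (fib n : ℤ) ^ 2,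
        ((fib (n + 3) : ℤ) / 2 - 1) * (fib (n + 1) : ℤ) ^ 2 +
          ((fib (n - 2) : ℤ) - 1) * (fib (n + 2) : ℤ) ^ 2 - (fib n : ℤ) ^ 2} := by
  obtain ⟨m, rfl⟩ : ∃ m, n = m + 3 := ⟨n - 3, by omega⟩
  obtain ⟨e, he⟩ : 2 ∣ fib (m + 3) := fib_dvd 3 _ (by omega)
  obtain ⟨d, hd⟩ : 2 ∣ fib m := fib_dvd 3 _ (by omega)
  obtain ⟨h1, h4, h5, h6⟩ := fib_eq_of_fib_eq_two_mul he hd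
  have hd0 : 0 < d := by have := fib_pos.mpr (show 0 < m by omega); omega
  have hde : d < e := by have := fib_pos.mpr (show 0 < m + 1 by omega); omega
  have hcop : Coprime (2 * e) (3 * e + d) := he ▸ h4 ▸ fib_coprime_fib_succ (m + 3)
  have hPF : {x | IsPF (m + 3) x} = {x | IsPseudoFrobenius (S e d) x} := by
    change {x | IsPseudoFrobenius (natSpan ((fib (m + 3) : ℤ) ^ 2) ((fib (m + 4) : ℤ) ^ 2)
      ((fib (m + 5) : ℤ) ^ 2)) x} = _
    rw [he, h4, h5, S, A, B, C]
    push_cast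
    rfl
  rw [hPF, setOf_isPseudoFrobenius hd0 hde hcop]
  have hhalf₁ : (2 * e : ℤ) / 2 = e := by omega
  have hhalf₂ : (8 * e + 2 * d : ℤ) / 2 = 4 * e + d := by omega
  have hfib : (fib (m + 1) : ℤ) = e - d := by omega
  simp only [add_assoc, Nat.reduceAdd, show m + 3 - 2 = m + 1 by omega, he, h4, h5, h6, A, B, C]
  push_cast
  rw [hhalf₁, hhalf₂, hfib]
end

section
/- For every integer n ≥ 6 with n ≡ 0 (mod 3), the Apéry set Ap(S(n), f_n²) equals the set of all numbers λ·f_{n+1}² + μ·f_{n+2}² where (λ, μ) ranges over the pairs with 0 ≤ λ ≤ f_{n+3}/2 − 1 and 0 ≤ μ ≤ f_n/2 − 1, excluding those pairs with both f_{n+1} ≤ λ ≤ f_{n+3}/2 − 1 and f_{n−2} ≤ μ ≤ f_n/2 − 1. -/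
open Nat

/-- The numerical semigroup `S(n) = ⟨fib n ^ 2, fib (n+1) ^ 2, fib (n+2) ^ 2⟩` as a set
of natural numbers. -/
def S (n : ℕ) : Set ℕ :=
  {x | ∃ a b c : ℕ, x = a * fib n ^ 2 + b * fib (n + 1) ^ 2 + c * fib (n + 2) ^ 2}

/-- The Apéry set of `m` in `S(n)`. -/
def Apery (n m : ℕ) : Set ℕ :=
  {s | s ∈ S n ∧ ¬∃ t ∈ S n, s = t + m}

/-!
Write `f (n-3) = 2u` and `f (n-2) = y`, so that `f n = 2(u+y)`, `f (n+1) = 4u+3y`,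
`f (n+2) = 6u+5y` and `f (n+3) = 2(5u+4y)`. The relations
* `(u+y) f (n+2)² = (5u+4y) f n² + (u+y) f (n+1)²`,
* `(5u+4y) f (n+1)² = (11u+9y) f n² + u f (n+2)²`,
* `(4u+3y) f (n+1)² + y f (n+2)² = (16u+13y) f n²`

rewrite any element of `S(n)` as `l f (n+1)² + m f (n+2)² + k f n²` with `(l, m)` in the box of the
theorem, without decreasing the coefficient of `f n²`. Conversely, if two box elements are congruent
modulo `f n²`, then the differences `e, d` of their coefficients satisfy `e + d = 2 f n j` and
`u + y ∣ j u + d`, because `f n` and `f (n+1)` are coprime and `f (n+2) = f n + f (n+1)`. The box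
bounds leave `j ∈ {-1, 0, 1}`; `j = ±1` forces `(e, d) = ±(f (n+1), f (n-2))`, which is exactly
what the excluded corner of the box rules out.
-/

namespace Int

variable {u y e d : ℤ}

theorem exists_add_eq_and_dvd_of_sq_dvd (hs : u + y ≠ 0)
    (hcop : IsCoprime (2 * u + 2 * y) (4 * u + 3 * y))
    (h : (2 * u + 2 * y) ^ 2 ∣ e * (4 * u + 3 * y) ^ 2 + d * (6 * u + 5 * y) ^ 2) :
    ∃ j, e + d = 4 * (u + y) * j ∧ u + y ∣ j * u + d := by
  obtain ⟨K, hK⟩ := h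
  obtain ⟨k, hk⟩ : 2 * u + 2 * y ∣ e + d :=
    (hcop.pow_right (n := 2)).dvd_of_dvd_mul_right
      ⟨K * (2 * u + 2 * y) - d * (10 * u + 8 * y), by linear_combination hK⟩
  have hkB : (4 * u + 3 * y) * (k * (4 * u + 3 * y) + 2 * d) = (2 * u + 2 * y) * (K - d) := by
    have hA : 2 * u + 2 * y ≠ 0 := by contrapose! hs; linarith
    refine mul_left_cancel₀ hA ?_
    linear_combination hK - (4 * u + 3 * y) ^ 2 * hk
  obtain ⟨w, hw⟩ : 2 * u + 2 * y ∣ k * (4 * u + 3 * y) + 2 * d :=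
    hcop.dvd_of_dvd_mul_left ⟨K - d, hkB⟩
  obtain ⟨j, rfl⟩ : 2 ∣ k := by
    have hodd : IsCoprime 2 (4 * u + 3 * y) :=
      IsCoprime.of_mul_left_left (by rwa [show 2 * u + 2 * y = 2 * (u + y) by ring] at hcop)
    exact hodd.dvd_of_dvd_mul_right ⟨(u + y) * w - d, by linear_combination hw⟩
  have hw' : j * (4 * u + 3 * y) + d = (u + y) * w := by linarith
  exact ⟨j, by linear_combination hk, w - 3 * j, by linear_combination hw'⟩

theorem eq_of_add_eq_of_dvd (hy : 0 ≤ y) (he : e < 5 * u + 4 * y) (hd : |d| < u + y)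
    (hed : e + d = 4 * (u + y)) (hdvd : u + y ∣ u + d) : e = 4 * u + 3 * y ∧ d = y := by
  obtain ⟨hd₁, hd₂⟩ := abs_lt.1 hd
  by_cases hud : u + d < u + y
  · have : u + d = 0 := eq_zero_of_abs_lt_dvd hdvd (abs_lt.2 ⟨by linarith, hud⟩)
    linarith
  · have : d - y = 0 :=
      eq_zero_of_abs_lt_dvd (by simpa using hdvd.sub (dvd_refl (u + y)))
        (abs_lt.2 ⟨by linarith, by linarith⟩)
    constructor <;> linarith

theorem eq_zero_or_eq_or_eq_neg_of_sq_dvd (hu : 0 ≤ u) (hy : 0 ≤ y)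
    (hcop : IsCoprime (2 * u + 2 * y) (4 * u + 3 * y))
    (he : |e| < 5 * u + 4 * y) (hd : |d| < u + y)
    (h : (2 * u + 2 * y) ^ 2 ∣ e * (4 * u + 3 * y) ^ 2 + d * (6 * u + 5 * y) ^ 2) :
    e = 0 ∧ d = 0 ∨ e = 4 * u + 3 * y ∧ d = y ∨ e = -(4 * u + 3 * y) ∧ d = -y := by
  obtain ⟨he₁, he₂⟩ := abs_lt.1 he
  obtain ⟨hd₁, hd₂⟩ := abs_lt.1 hd
  obtain ⟨j, hed, hdvd⟩ := exists_add_eq_and_dvd_of_sq_dvd (by linarith) hcop h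
  have hj : -2 < j ∧ j < 2 := by constructor <;> nlinarith
  obtain rfl | rfl | rfl : j = -1 ∨ j = 0 ∨ j = 1 := by omega
  · have := eq_of_add_eq_of_dvd (u := u) (e := -e) (d := -d) hy (by linarith) (by rwa [abs_neg])
      (by linarith) (by simpa [neg_add_eq_sub, add_comm] using hdvd.neg_right)
    right; right; constructor <;> linarith
  · have : d = 0 := eq_zero_of_abs_lt_dvd (by simpa using hdvd) hd
    left; constructor <;> linarith
  · exact Or.inr (Or.inl (eq_of_add_eq_of_dvd hy he₂ hd (by linarith) (by simpa using hdvd)))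

end Int

section ReducedPair

variable {u y : ℕ}

def IsReducedPair (u y l m : ℕ) : Prop :=
  l < 5 * u + 4 * y ∧ m < u + y ∧ ¬(4 * u + 3 * y ≤ l ∧ y ≤ m)

theorem exists_isReducedPair (hs : 0 < u + y) (α β γ : ℕ) :
    ∃ l m k, IsReducedPair u y l m ∧ α ≤ k ∧
      α * (2 * u + 2 * y) ^ 2 + β * (4 * u + 3 * y) ^ 2 + γ * (6 * u + 5 * y) ^ 2 =
        l * (4 * u + 3 * y) ^ 2 + m * (6 * u + 5 * y) ^ 2 + k * (2 * u + 2 * y) ^ 2 := by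
  induction hN : β + 2 * γ using Nat.strong_induction_on generalizing α β γ with
  | _ N ih =>
  by_cases hγ : u + y ≤ γ
  · obtain ⟨γ, rfl⟩ := Nat.exists_eq_add_of_le' hγ
    obtain ⟨l, m, k, hred, hk, heq⟩ :=
      ih _ (by omega) (α + (5 * u + 4 * y)) (β + (u + y)) γ rfl
    exact ⟨l, m, k, hred, by omega, by rw [← heq]; ring⟩
  by_cases hβ : 5 * u + 4 * y ≤ β
  · obtain ⟨β, rfl⟩ := Nat.exists_eq_add_of_le' hβ
    obtain ⟨l, m, k, hred, hk, heq⟩ :=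
      ih _ (by omega) (α + (11 * u + 9 * y)) β (γ + u) rfl
    exact ⟨l, m, k, hred, by omega, by rw [← heq]; ring⟩
  by_cases hβγ : 4 * u + 3 * y ≤ β ∧ y ≤ γ
  · obtain ⟨β, rfl⟩ := Nat.exists_eq_add_of_le' hβγ.1
    obtain ⟨γ, rfl⟩ := Nat.exists_eq_add_of_le' hβγ.2
    exact ⟨β, γ, α + (16 * u + 13 * y), ⟨by omega, by omega, by omega⟩, by omega, by ring⟩
  exact ⟨β, γ, α, ⟨by omega, by omega, hβγ⟩, le_rfl, by ring⟩

theorem IsReducedPair.eq_of_modEq (hcop : Coprime (2 * u + 2 * y) (4 * u + 3 * y))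
    {l m l' m' : ℕ} (h : IsReducedPair u y l m) (h' : IsReducedPair u y l' m')
    (hmod : l * (4 * u + 3 * y) ^ 2 + m * (6 * u + 5 * y) ^ 2 ≡
      l' * (4 * u + 3 * y) ^ 2 + m' * (6 * u + 5 * y) ^ 2 [MOD (2 * u + 2 * y) ^ 2]) :
    l = l' ∧ m = m' := by
  obtain ⟨hl, hm, hlm⟩ := h
  obtain ⟨hl', hm', hlm'⟩ := h'
  have hdvd : (2 * (u : ℤ) + 2 * y) ^ 2 ∣
      ((l : ℤ) - l') * (4 * u + 3 * y) ^ 2 + ((m : ℤ) - m') * (6 * u + 5 * y) ^ 2 := by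
    have := Nat.modEq_iff_dvd.1 hmod.symm
    push_cast at this
    convert this using 1
    ring
  have hcop' : IsCoprime (2 * (u : ℤ) + 2 * y) (4 * u + 3 * y) := by
    simpa using Nat.isCoprime_iff_coprime.2 hcop
  rcases Int.eq_zero_or_eq_or_eq_neg_of_sq_dvd (by positivity) (by positivity) hcop'
    (abs_lt.2 ⟨by omega, by omega⟩) (abs_lt.2 ⟨by omega, by omega⟩) hdvd with
    ⟨he, hd⟩ | ⟨he, hd⟩ | ⟨he, hd⟩ <;> omega

end ReducedPair

theorem apery_eq_of_fib_eq {n u y : ℕ} (ha : fib n = 2 * u + 2 * y)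
    (hb : fib (n + 1) = 4 * u + 3 * y) :
    Apery n (fib n ^ 2) =
      {x | ∃ l m, IsReducedPair u y l m ∧ x = l * fib (n + 1) ^ 2 + m * fib (n + 2) ^ 2} := by
  have hc : fib (n + 2) = 6 * u + 5 * y := by rw [fib_add_two]; omega
  have hs : 0 < u + y := by have := (fib_pos (n := n + 1)).2 (by omega); omega
  have hcop : Coprime (2 * u + 2 * y) (4 * u + 3 * y) := ha ▸ hb ▸ fib_coprime_fib_succ n
  ext x
  simp only [Apery, S, Set.mem_ofPred_eq, ha, hb, hc]
  constructor
  · rintro ⟨⟨α, β, γ, rfl⟩, hmin⟩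
    obtain ⟨l, m, k, hred, -, heq⟩ := exists_isReducedPair hs α β γ
    refine ⟨l, m, hred, ?_⟩
    obtain _ | k := k
    · simpa using heq
    · refine absurd ⟨_, ⟨k, l, m, rfl⟩, ?_⟩ hmin
      rw [heq]; ring
  · rintro ⟨l, m, hred, rfl⟩
    refine ⟨⟨0, l, m, by ring⟩, ?_⟩
    rintro ⟨_, ⟨α, β, γ, rfl⟩, heq⟩
    obtain ⟨l', m', k, hred', hk, heq'⟩ := exists_isReducedPair hs (α + 1) β γ
    replace heq : l * (4 * u + 3 * y) ^ 2 + m * (6 * u + 5 * y) ^ 2 =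
        l' * (4 * u + 3 * y) ^ 2 + m' * (6 * u + 5 * y) ^ 2 + k * (2 * u + 2 * y) ^ 2 := by
      rw [heq, ← heq']; ring
    obtain ⟨rfl, rfl⟩ := hred.eq_of_modEq hcop hred'
      (Nat.modEq_iff_dvd.2 ⟨-k, by rw [heq]; push_cast; ring⟩)
    have : 0 < k * (2 * u + 2 * y) ^ 2 := Nat.mul_pos (by omega) (pow_pos (by omega) 2)
    omega

theorem apery_Sn_of_three_dvd (n : ℕ) (hn : 6 ≤ n) (h3 : n % 3 = 0) :
    Apery n (fib n ^ 2) =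
      {x | ∃ l m : ℕ, l < fib (n + 3) / 2 ∧ m < fib n / 2 ∧
        ¬(fib (n + 1) ≤ l ∧ fib (n - 2) ≤ m) ∧
        x = l * fib (n + 1) ^ 2 + m * fib (n + 2) ^ 2} := by
  obtain ⟨k, rfl⟩ : ∃ k, n = k + 3 := ⟨n - 3, by omega⟩
  obtain ⟨u, hu⟩ : 2 ∣ fib k := fib_dvd 3 k (by omega)
  set y := fib (k + 1)
  have hf2 : fib (k + 2) = 2 * u + y := by rw [fib_add_two, hu]
  have hf3 : fib (k + 3) = 2 * u + 2 * y := by rw [fib_add_two, hf2]; ring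
  have hf4 : fib (k + 3 + 1) = 4 * u + 3 * y := by rw [fib_add_two, hf2, hf3]; ring
  have hf5 : fib (k + 3 + 2) = 6 * u + 5 * y := by rw [fib_add_two, hf3, hf4]; ring
  have hf6 : fib (k + 3 + 3) = 10 * u + 8 * y := by rw [fib_add_two, hf4, hf5]; ring
  rw [apery_eq_of_fib_eq hf3 hf4, hf3, hf4, hf6, show k + 3 - 2 = k + 1 by omega,
    show (10 * u + 8 * y) / 2 = 5 * u + 4 * y by omega, show (2 * u + 2 * y) / 2 = u + y by omega]
  simp only [IsReducedPair, and_assoc]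
  rfl
end

section
/- For every integer n ≥ 4 with n ≡ 1 (mod 3), the Apéry set Ap(S(n), f_n²) equals the set of all numbers λ·f_{n+1}² + μ·f_{n+2}² where (λ, μ) ranges over the pairs with 0 ≤ λ ≤ f_{n+2}/2 − 1 and 0 ≤ μ ≤ f_n − 1, excluding those pairs with both f_{n−1}/2 ≤ λ ≤ f_{n+2}/2 − 1 and (f_{n−2} + f_n)/2 ≤ μ ≤ f_n − 1. -/
open Nat

/-!
Put `p = f_{n-2}` and `2Q = f_{n-1}` (even because `3 ∣ n - 1`), so that `A = f_n = p + 2Q`,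
`B = f_{n+1} = p + 4Q`, `C = f_{n+2} = 2p + 6Q`, and write `a, b, c = A², B², C²`. The relations
`A c = (B + C) a + A b` and `(p + 3Q) b = (p + 3Q) a + Q c` let one push any `α a + l b + m c`
into the box `l < p + 3Q`, `m < A` without lowering `α`, and `Q b + (p + Q) c = (4p + 13Q) a`
removes the corner `Q ≤ l`, `p + Q ≤ m`. Conversely, as `b ≡ c ≡ (2Q)² (mod A)` and
`gcd(A, 2Q) = 1`, the only differences `(d, e)` of box points with `a ∣ d b + e c` are `0` and
`±(Q, p + Q)`, so no element `l b + m c` outside the corner is of the form `a + s` with `s ∈ S(n)`.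
-/

def span3 (a b c : ℕ) : Set ℕ := {x | ∃ i j k : ℕ, x = i * a + j * b + k * c}

def aperySet (T : Set ℕ) (m : ℕ) : Set ℕ := {s | s ∈ T ∧ ¬∃ t ∈ T, s = t + m}

theorem apery_eq_aperySet_span3 (n m : ℕ) :
    Apery n m = aperySet (span3 (fib n ^ 2) (fib (n + 1) ^ 2) (fib (n + 2) ^ 2)) m :=
  rfl

theorem eq_zero_or_eq_corner_or_eq_neg_corner_of_dvd {p Q d e : ℤ} (hp : 0 ≤ p) (hQ : 0 ≤ Q)
    (hco : IsCoprime (p + 2*Q) (2*Q)) (hd : |d| < p + 3*Q) (he : |e| < p + 2*Q)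
    (hdvd : (p + 2*Q)^2 ∣ d * (p + 4*Q)^2 + e * (2*p + 6*Q)^2) :
    (d = 0 ∧ e = 0) ∨ (d = Q ∧ e = p + Q) ∨ (d = -Q ∧ e = -(p + Q)) := by
  obtain ⟨K, hK⟩ := hdvd
  have hA : p + 2*Q ≠ 0 := by have := abs_nonneg e; omega
  -- `b ≡ c ≡ (2Q)² (mod A)` and `A` is prime to `2Q`, so `A ∣ d + e`
  have hsum : p + 2*Q ∣ (d + e) * (2*Q * (2*Q)) :=
    ⟨K * (p + 2*Q) - (d + 4*e) * (p + 2*Q) - 4*Q*d - 8*Q*e, by linear_combination hK⟩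
  obtain ⟨k, hk⟩ := (hco.mul_right hco).dvd_of_dvd_mul_right hsum
  -- modulo `A²`, `d b + e c ≡ 4QA (kQ + e)`
  have hmod : p + 2*Q ∣ (k*Q + e) * (2*Q * 2) := by
    refine ⟨K - (p + 2*Q) * k - 4*Q*k - 3*e, mul_left_cancel₀ hA ?_⟩
    linear_combination hK - (p + 4*Q)^2 * hk
  obtain ⟨j, hj⟩ := (hco.mul_right hco.of_mul_right_left).dvd_of_dvd_mul_right hmod
  rw [abs_lt] at hd he
  obtain ⟨hk1, hk2⟩ : -3 < k ∧ k < 3 := by constructor <;> nlinarith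
  obtain ⟨hj1, hj2⟩ : -2 < j ∧ j < 2 := by constructor <;> nlinarith
  interval_cases k <;> interval_cases j <;> omega

theorem trade_c_for_ab (p Q : ℕ) :
    (p + 2*Q) * (2*p + 6*Q)^2 = (3*p + 10*Q) * (p + 2*Q)^2 + (p + 2*Q) * (p + 4*Q)^2 := by
  ring

theorem trade_b_for_ac (p Q : ℕ) :
    (p + 3*Q) * (p + 4*Q)^2 = (p + 3*Q) * (p + 2*Q)^2 + Q * (2*p + 6*Q)^2 := by
  ring

theorem corner_eq_mul_a (p Q : ℕ) :
    Q * (p + 4*Q)^2 + (p + Q) * (2*p + 6*Q)^2 = (4*p + 13*Q) * (p + 2*Q)^2 := by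
  ring

section Box

variable {p Q : ℕ}

theorem exists_bounded_repr (hA : 0 < p + 2*Q) (α l m : ℕ) :
    ∃ α' l' m', α ≤ α' ∧ l' < p + 3*Q ∧ m' < p + 2*Q ∧
      α' * (p + 2*Q)^2 + l' * (p + 4*Q)^2 + m' * (2*p + 6*Q)^2 =
        α * (p + 2*Q)^2 + l * (p + 4*Q)^2 + m * (2*p + 6*Q)^2 := by
  induction hN : l * (p + 4*Q)^2 + m * (2*p + 6*Q)^2 using Nat.strong_induction_on
    generalizing α l m with
  | _ N ih =>
  by_cases hm : p + 2*Q ≤ m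
  · obtain ⟨m, rfl⟩ := Nat.exists_eq_add_of_le' hm
    have hBC : (p + 4*Q)^2 < (2*p + 6*Q)^2 := Nat.pow_lt_pow_left (by omega) (by omega)
    obtain ⟨α', l', m', hα, hl', hm', h⟩ :=
      ih _ (by rw [← hN]; nlinarith) (α + (3*p + 10*Q)) (l + (p + 2*Q)) m rfl
    exact ⟨α', l', m', by omega, hl', hm', by rw [h]; linear_combination trade_c_for_ab p Q⟩
  by_cases hl : p + 3*Q ≤ l
  · obtain ⟨l, rfl⟩ := Nat.exists_eq_add_of_le' hl
    have hpos : 0 < (p + 3*Q) * (p + 2*Q)^2 := Nat.mul_pos (by omega) (by positivity)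
    obtain ⟨α', l', m', hα, hl', hm', h⟩ :=
      ih _ (by rw [← hN]; linarith [trade_b_for_ac p Q]) (α + (p + 3*Q)) l (m + Q) rfl
    exact ⟨α', l', m', by omega, hl', hm', by rw [h]; linear_combination trade_b_for_ac p Q⟩
  exact ⟨α, l, m, le_rfl, by omega, by omega, rfl⟩

theorem corner_le_of_eq_add (hco : Nat.Coprime (p + 2*Q) (2*Q)) {K l m l' m' : ℕ} (hK : 0 < K)
    (hl : l < p + 3*Q) (hm : m < p + 2*Q) (hl' : l' < p + 3*Q) (hm' : m' < p + 2*Q)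
    (h : l * (p + 4*Q)^2 + m * (2*p + 6*Q)^2 =
      K * (p + 2*Q)^2 + l' * (p + 4*Q)^2 + m' * (2*p + 6*Q)^2) :
    Q ≤ l ∧ p + Q ≤ m := by
  have hcoℤ : IsCoprime ((p : ℤ) + 2*Q) (2*Q) := by exact_mod_cast Nat.isCoprime_iff_coprime.2 hco
  have hℤ : (l * (p + 4*Q)^2 + m * (2*p + 6*Q)^2 : ℤ) =
      K * (p + 2*Q)^2 + l' * (p + 4*Q)^2 + m' * (2*p + 6*Q)^2 := by exact_mod_cast h
  have hKa : 0 < K * (p + 2*Q)^2 := Nat.mul_pos hK (pow_pos (by omega) 2)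
  rcases eq_zero_or_eq_corner_or_eq_neg_corner_of_dvd (d := l - l') (e := m - m')
      (by positivity) (by positivity) hcoℤ (by rw [abs_lt]; omega) (by rw [abs_lt]; omega)
      ⟨K, by linear_combination hℤ⟩ with ⟨hd, he⟩ | ⟨hd, he⟩ | ⟨hd, he⟩
  · obtain ⟨rfl, rfl⟩ : l' = l ∧ m' = m := by omega
    omega
  · omega
  · obtain ⟨rfl, rfl⟩ : l' = l + Q ∧ m' = m + (p + Q) := by omega
    nlinarith

theorem aperySet_span3_eq (hco : Nat.Coprime (p + 2*Q) (2*Q)) :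
    aperySet (span3 ((p + 2*Q)^2) ((p + 4*Q)^2) ((2*p + 6*Q)^2)) ((p + 2*Q)^2) =
      {x | ∃ l m : ℕ, l < p + 3*Q ∧ m < p + 2*Q ∧ ¬(Q ≤ l ∧ p + Q ≤ m) ∧
        x = l * (p + 4*Q)^2 + m * (2*p + 6*Q)^2} := by
  have hA : 0 < p + 2*Q := Nat.pos_of_ne_zero fun h ↦ by simp_all
  ext x
  constructor
  · rintro ⟨⟨α, l, m, rfl⟩, hx⟩
    obtain ⟨α', l', m', -, hl', hm', h⟩ := exists_bounded_repr hA α l m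
    rw [← h] at hx ⊢
    obtain rfl : α' = 0 := by
      by_contra h0
      obtain ⟨β, rfl⟩ := Nat.exists_eq_add_one_of_ne_zero h0
      exact hx ⟨_, ⟨β, l', m', rfl⟩, by ring⟩
    refine ⟨l', m', hl', hm', ?_, by ring⟩
    rintro ⟨hQl, hpm⟩
    obtain ⟨l, rfl⟩ := Nat.exists_eq_add_of_le hQl
    obtain ⟨m, rfl⟩ := Nat.exists_eq_add_of_le hpm
    obtain ⟨γ, hγ⟩ := Nat.exists_eq_add_of_lt (show 0 < 4*p + 13*Q by omega)
    exact hx ⟨_, ⟨γ, l, m, rfl⟩, by linear_combination corner_eq_mul_a p Q + (p + 2*Q)^2 * hγ⟩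
  · rintro ⟨l, m, hl, hm, hcorner, rfl⟩
    refine ⟨⟨0, l, m, by ring⟩, ?_⟩
    rintro ⟨_, ⟨α, l₀, m₀, rfl⟩, h⟩
    obtain ⟨α', l', m', hα, hl', hm', h'⟩ := exists_bounded_repr hA (α + 1) l₀ m₀
    exact hcorner (corner_le_of_eq_add hco (K := α') (by omega) hl hm hl' hm' (by rw [h', h]; ring))

end Box

theorem apery_Sn_of_mod_three_eq_one (n : ℕ) (hn : 4 ≤ n) (h3 : n % 3 = 1) :
    Apery n (fib n ^ 2) =
      {x | ∃ l m : ℕ, l < fib (n + 2) / 2 ∧ m < fib n ∧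
        ¬(fib (n - 1) / 2 ≤ l ∧ (fib (n - 2) + fib n) / 2 ≤ m) ∧
        x = l * fib (n + 1) ^ 2 + m * fib (n + 2) ^ 2} := by
  obtain ⟨k, rfl⟩ : ∃ k, n = k + 2 := ⟨n - 2, by omega⟩
  obtain ⟨Q, hQ⟩ : 2 ∣ fib (k + 1) := Nat.fib_dvd 3 (k + 1) (by omega)
  have hA : fib (k + 2) = fib k + 2*Q := by rw [fib_add_two, hQ]
  have hB : fib (k + 2 + 1) = fib k + 4*Q := by rw [fib_add_two, hA, hQ]; ring
  have hC : fib (k + 2 + 2) = 2 * fib k + 6*Q := by rw [fib_add_two, hA, hB]; ring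
  have hco : Nat.Coprime (fib k + 2*Q) (2*Q) := by
    rw [← hA, ← hQ]; exact (fib_coprime_fib_succ (k + 1)).symm
  have e1 : (2 * fib k + 6*Q) / 2 = fib k + 3*Q := by omega
  have e2 : 2 * Q / 2 = Q := by omega
  have e3 : (fib k + (fib k + 2*Q)) / 2 = fib k + Q := by omega
  rw [apery_eq_aperySet_span3, show k + 2 - 1 = k + 1 from rfl, Nat.add_sub_cancel, hB, hC, hA,
    hQ, e1, e2, e3]
  exact aperySet_span3_eq hco
end

section
/- Let n ≥ 6 with n ≡ 0 (mod 3) (so that f_n, f_{n−3} and f_{n+3} are even and f_{n+2} + f_{n+4} is even). Then the following three identities hold: (1) f_{n+4}·f_n² = f_{n+1}·f_{n+1}² + f_{n−2}·f_{n+2}²; (2) (f_{n+3}/2)·f_{n+1}² = ((f_{n+2} + f_{n+4})/2)·f_n² + (f_{n−3}/2)·f_{n+2}²; (3) (f_n/2)·f_{n+2}² = (f_{n+3}/2)·f_n² + (f_n/2)·f_{n+1}². -/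
open Nat

/-! Writing every Fibonacci number involved as an integer combination of two consecutive ones
turns each identity, after doubling (2) and (3), into a polynomial identity valid at every index.
The halved coefficients are exact because `f 3 = 2` divides `f n` whenever `3 ∣ n`. -/

namespace Nat

theorem fib_add_six_mul_fib_add_two_sq (m : ℕ) :
    fib (m + 6) * fib (m + 2) ^ 2 = fib (m + 3) ^ 3 + fib m * fib (m + 4) ^ 2 := by
  simp only [fib_add_two]
  ring

theorem fib_add_six_mul_fib_add_four_sq (m : ℕ) :
    fib (m + 6) * fib (m + 4) ^ 2 =
      (fib (m + 5) + fib (m + 7)) * fib (m + 3) ^ 2 + fib m * fib (m + 5) ^ 2 := by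
  simp only [fib_add_two]
  ring

theorem fib_add_two_sq (n : ℕ) : fib (n + 2) ^ 2 = fib n * fib (n + 3) + fib (n + 1) ^ 2 := by
  simp only [fib_add_two]
  ring

theorem two_dvd_fib_of_three_dvd {n : ℕ} (h : 3 ∣ n) : 2 ∣ fib n :=
  fib_dvd 3 n h

end Nat

theorem div_two_mul_eq_div_two_mul_add_div_two_mul {a b c x y z : ℕ} (ha : 2 ∣ a) (hb : 2 ∣ b)
    (hc : 2 ∣ c) (h : a * x = b * y + c * z) : a / 2 * x = b / 2 * y + c / 2 * z := by
  obtain ⟨a, rfl⟩ := ha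
  obtain ⟨b, rfl⟩ := hb
  obtain ⟨c, rfl⟩ := hc
  simp only [Nat.mul_div_cancel_left _ two_pos]
  linarith

theorem fib_sq_identities_of_three_dvd (n : ℕ) (hn : 6 ≤ n) (h3 : n % 3 = 0) :
    fib (n + 4) * fib n ^ 2 = fib (n + 1) * fib (n + 1) ^ 2 + fib (n - 2) * fib (n + 2) ^ 2 ∧
    (fib (n + 3) / 2) * fib (n + 1) ^ 2 =
      ((fib (n + 2) + fib (n + 4)) / 2) * fib n ^ 2 + (fib (n - 3) / 2) * fib (n + 2) ^ 2 ∧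
    (fib n / 2) * fib (n + 2) ^ 2 =
      (fib (n + 3) / 2) * fib n ^ 2 + (fib n / 2) * fib (n + 1) ^ 2 := by
  obtain ⟨m, rfl⟩ : ∃ m, n = m + 3 := ⟨n - 3, by omega⟩
  have even_m := two_dvd_fib_of_three_dvd (by omega : 3 ∣ m)
  have even_m3 := two_dvd_fib_of_three_dvd (by omega : 3 ∣ m + 3)
  have even_m6 := two_dvd_fib_of_three_dvd (by omega : 3 ∣ m + 6)
  have even_sum : 2 ∣ fib (m + 5) + fib (m + 7) := by
    rw [fib_add_two (n := m + 5), ← add_assoc, ← two_mul]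
    exact dvd_add (dvd_mul_right 2 _) even_m6
  refine ⟨?_, ?_, ?_⟩
  · obtain ⟨k, rfl⟩ : ∃ k, m = k + 1 := ⟨m - 1, by omega⟩
    simpa [← pow_succ'] using fib_add_six_mul_fib_add_two_sq (k + 2)
  · exact div_two_mul_eq_div_two_mul_add_div_two_mul even_m6 even_sum even_m
      (fib_add_six_mul_fib_add_four_sq m)
  · apply div_two_mul_eq_div_two_mul_add_div_two_mul even_m3 even_m6 even_m3
    rw [fib_add_two_sq]; ring
end

section
/- For every integer n ≥ 8, the following three identities hold: (1) f_{n+4}·f_n² = f_{n+1}·f_{n+1}² + f_{n−2}·f_{n+2}²; (2) f_{n+2}·f_{n+1}² = f_{n+2}·f_n² + f_{n−1}·f_{n+2}²; (3) f_n·f_{n+2}² = f_{n+3}·f_n² + f_n·f_{n+1}². -/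
open Nat

/-!
Put `n = m + 2`. By the addition formula `f_{m+k+1} = f_k f_m + f_{k+1} f_{m+1}`, every Fibonacci
number occurring in the identities is a linear form in `f_m` and `f_{m+1}` with constant
coefficients, and each identity becomes a polynomial identity in these two variables.
-/

theorem fib_add_succ_eq (m k : ℕ) :
    fib (m + (k + 1)) = fib k * fib m + fib (k + 1) * fib (m + 1) := by
  rw [← add_assoc, fib_add]; ring

theorem fib_sq_identities (n : ℕ) (hn : 8 ≤ n) :
    fib (n + 4) * fib n ^ 2 = fib (n + 1) * fib (n + 1) ^ 2 + fib (n - 2) * fib (n + 2) ^ 2 ∧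
    fib (n + 2) * fib (n + 1) ^ 2 = fib (n + 2) * fib n ^ 2 + fib (n - 1) * fib (n + 2) ^ 2 ∧
    fib n * fib (n + 2) ^ 2 = fib (n + 3) * fib n ^ 2 + fib n * fib (n + 1) ^ 2 := by
  obtain ⟨m, rfl⟩ : ∃ m, n = m + 2 := ⟨n - 2, by omega⟩
  simp only [Nat.add_sub_cancel, add_assoc, Nat.reduceAdd, show m + 2 - 1 = m + 1 by omega]
  rw [fib_add_succ_eq m 5, fib_add_succ_eq m 4, fib_add_succ_eq m 3, fib_add_succ_eq m 2,
    fib_add_succ_eq m 1]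
  norm_num [fib_add_two]
  exact ⟨by ring, by ring, by ring⟩
end

section
/- For every integer n ≥ 4: gcd(f_n², f_{n+1}²) = gcd(f_n², f_{n+2}²) = gcd(f_{n+1}², f_{n+2}²) = 1, and none of f_n², f_{n+1}², f_{n+2}² can be written as a non-negative integer linear combination of the other two; in particular, there exist no λ, μ ∈ ℕ with f_{n+2}² = λ·f_n² + μ·f_{n+1}². Consequently S(n) is a numerical semigroup whose minimal system of generators is {f_n², f_{n+1}², f_{n+2}²}, i.e. S(n) has embedding dimension 3. -/
open Nat

/-! Write `a = f_n`, `b = f_{n+1}`, so `f_{n+2} = a + b` with `a, b` coprime and `3 ≤ a < b`.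
Coprimality of the squares comes from that of `a, b`, and two coprime generators already make
the complement finite. A generator outside the closure of the other two cannot split as a sum of
two nonzero elements of `S(n)`, so it lies in every generating set. Here `a²` is smaller than the
other generators and `b²` could only be a multiple of `a²`; finally `(a + b)² = l a² + m b²`
forces `a ∣ m - 1` (reduce modulo `a`), so either `m = 1`, whence `a ∣ 2b`, or `m ≥ 4`, whence
`m b² > (a + b)²`. -/

theorem AddSubmonoid.mem_of_mem_closure_of_forall_add_eq {M : Type*} [AddZeroClass M]
    {A : Set M} {x : M} (hx : x ∈ closure A) (hx0 : x ≠ 0)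
    (hirr : ∀ y ∈ closure A, ∀ z ∈ closure A, y + z = x → y = 0 ∨ z = 0) : x ∈ A := by
  suffices ∀ y (hy : y ∈ closure A), y = x → y ∈ A from this x hx rfl
  intro y hy
  induction hy using closure_induction with
  | mem y hy => exact fun _ ↦ hy
  | zero => exact fun h ↦ absurd h.symm hx0
  | add y z hy hz ihy ihz =>
    intro hyz
    rcases hirr y hy z hz hyz with rfl | rfl
    · rw [zero_add] at hyz ⊢
      exact ihz hyz
    · rw [add_zero] at hyz ⊢
      exact ihy hyz

namespace Nat

theorem mem_closure_pair_iff {q r x : ℕ} :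
    x ∈ AddSubmonoid.closure ({q, r} : Set ℕ) ↔ ∃ l m : ℕ, x = l * q + m * r := by
  simp only [AddSubmonoid.mem_closure_pair, smul_eq_mul, eq_comm]

theorem mem_closure_insert_iff {x y : ℕ} {T : Set ℕ} :
    y ∈ AddSubmonoid.closure (insert x T) ↔
      ∃ k : ℕ, ∃ t ∈ AddSubmonoid.closure T, y = k * x + t := by
  simp only [Set.insert_eq, AddSubmonoid.closure_union, AddSubmonoid.mem_sup,
    AddSubmonoid.mem_closure_singleton, smul_eq_mul]
  constructor
  · rintro ⟨_, ⟨k, rfl⟩, t, ht, rfl⟩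
    exact ⟨k, t, ht, rfl⟩
  · rintro ⟨k, t, ht, rfl⟩
    exact ⟨_, ⟨k, rfl⟩, t, ht, rfl⟩

theorem eq_zero_or_eq_zero_of_add_eq_of_notMem_closure {x : ℕ} {T : Set ℕ}
    (hx : x ∉ AddSubmonoid.closure T) {y z : ℕ} (hy : y ∈ AddSubmonoid.closure (insert x T))
    (hz : z ∈ AddSubmonoid.closure (insert x T)) (hyz : y + z = x) : y = 0 ∨ z = 0 := by
  obtain ⟨k, t, ht, rfl⟩ := mem_closure_insert_iff.mp hy
  obtain ⟨k', t', ht', rfl⟩ := mem_closure_insert_iff.mp hz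
  by_cases hk : k = 0
  · by_cases hk' : k' = 0
    · subst hk hk'
      simp only [zero_mul, zero_add] at hyz
      exact absurd (hyz ▸ add_mem ht ht') hx
    · have : x ≤ k' * x := Nat.le_mul_of_pos_left x (pos_of_ne_zero hk')
      omega
  · have : x ≤ k * x := Nat.le_mul_of_pos_left x (pos_of_ne_zero hk)
    omega

theorem mem_of_closure_eq_closure_insert {A T : Set ℕ} {x : ℕ}
    (hx : x ∉ AddSubmonoid.closure T)
    (hA : AddSubmonoid.closure A = AddSubmonoid.closure (insert x T)) : x ∈ A := by
  refine AddSubmonoid.mem_of_mem_closure_of_forall_add_eq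
    (hA ▸ AddSubmonoid.subset_closure (Set.mem_insert x T))
    (ne_of_mem_of_not_mem (AddSubmonoid.zero_mem _) hx).symm fun y hy z hz ↦ ?_
  rw [hA] at hy hz
  exact eq_zero_or_eq_zero_of_add_eq_of_notMem_closure hx hy hz

theorem triple_subset_of_closure_eq {p q r : ℕ}
    (hp : p ∉ AddSubmonoid.closure ({q, r} : Set ℕ))
    (hq : q ∉ AddSubmonoid.closure ({p, r} : Set ℕ))
    (hr : r ∉ AddSubmonoid.closure ({p, q} : Set ℕ)) {A : Set ℕ}
    (hA : AddSubmonoid.closure A = AddSubmonoid.closure ({p, q, r} : Set ℕ)) :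
    {p, q, r} ⊆ A := by
  simp only [Set.insert_subset_iff, Set.singleton_subset_iff]
  refine ⟨mem_of_closure_eq_closure_insert hp hA, mem_of_closure_eq_closure_insert hq ?_,
    mem_of_closure_eq_closure_insert hr ?_⟩
  · rw [hA, Set.insert_comm]
  · rw [hA, Set.pair_comm q r, Set.insert_comm]

theorem finite_setOf_notMem_closure_of_coprime {s : Set ℕ} {p q : ℕ} (hp : p ∈ s)
    (hq : q ∈ s) (hpq : Coprime p q) : {x | x ∉ AddSubmonoid.closure s}.Finite := by
  have hs : setGcd s = 1 :=
    eq_one_of_dvd_one (hpq ▸ dvd_gcd (setGcd_dvd_of_mem hp) (setGcd_dvd_of_mem hq))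
  obtain ⟨N, hN⟩ := exists_mem_closure_of_ge s
  exact (Set.finite_Iio N).subset fun x hx ↦
    Set.mem_Iio.mpr (lt_of_not_ge fun hNx ↦ hx (hN x hNx (hs ▸ one_dvd x)))

theorem notMem_closure_pair_of_lt {p q r : ℕ} (hp : 0 < p) (hpq : p < q) (hpr : p < r) :
    p ∉ AddSubmonoid.closure ({q, r} : Set ℕ) := by
  rw [mem_closure_pair_iff]
  rintro ⟨l, m, h⟩
  rcases l with _ | l
  · rcases m with _ | m
    · omega
    · nlinarith
  · nlinarith

theorem notMem_closure_pair_of_coprime {p q r : ℕ} (hp : 1 < p) (hpq : Coprime p q)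
    (hqr : q < r) : q ∉ AddSubmonoid.closure ({p, r} : Set ℕ) := by
  rw [mem_closure_pair_iff]
  rintro ⟨l, m, h⟩
  rcases m with _ | m
  · have := hpq.eq_one_of_dvd ⟨l, by rw [h]; ring⟩
    omega
  · nlinarith

theorem add_sq_notMem_closure_sq {a b : ℕ} (hcop : Coprime a b) (ha : 3 ≤ a) (hab : a < b) :
    (a + b) ^ 2 ∉ AddSubmonoid.closure ({a ^ 2, b ^ 2} : Set ℕ) := by
  rw [mem_closure_pair_iff]
  rintro ⟨l, m, h⟩
  have hdvd : (a : ℤ) ∣ m - 1 := by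
    have hcop_sq : IsCoprime (a : ℤ) ((b : ℤ) ^ 2) := (isCoprime_iff_coprime.mpr hcop).pow_right
    have hℤ : ((a : ℤ) + b) ^ 2 = l * a ^ 2 + m * b ^ 2 := by exact_mod_cast h
    exact hcop_sq.dvd_of_dvd_mul_right ⟨a + 2 * b - l * a, by linear_combination -hℤ⟩
  obtain ⟨k, hk⟩ := hdvd
  rcases lt_trichotomy k 0 with hk0 | rfl | hk0
  · nlinarith
  · obtain rfl : m = 1 := by omega
    have hla : l * a = a + 2 * b :=
      Nat.eq_of_mul_eq_mul_left (by omega : 0 < a) (by linear_combination h.symm)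
    have h2 : a ∣ 2 := hcop.dvd_of_dvd_mul_right <|
      (Nat.dvd_add_right (dvd_refl a)).mp (hla ▸ dvd_mul_left a l)
    have := Nat.le_of_dvd two_pos h2
    omega
  · have hm : 4 ≤ m := by nlinarith
    nlinarith

end Nat

theorem Sn_numerical_semigroup_embdim_three (n : ℕ) (hn : 4 ≤ n) :
    Nat.gcd (fib n ^ 2) (fib (n + 1) ^ 2) = 1 ∧
    Nat.gcd (fib n ^ 2) (fib (n + 2) ^ 2) = 1 ∧
    Nat.gcd (fib (n + 1) ^ 2) (fib (n + 2) ^ 2) = 1 ∧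
    (¬∃ l m : ℕ, fib n ^ 2 = l * fib (n + 1) ^ 2 + m * fib (n + 2) ^ 2) ∧
    (¬∃ l m : ℕ, fib (n + 1) ^ 2 = l * fib n ^ 2 + m * fib (n + 2) ^ 2) ∧
    (¬∃ l m : ℕ, fib (n + 2) ^ 2 = l * fib n ^ 2 + m * fib (n + 1) ^ 2) ∧
    {x : ℕ |
      x ∉ AddSubmonoid.closure ({fib n ^ 2, fib (n + 1) ^ 2, fib (n + 2) ^ 2} : Set ℕ)}.Finite ∧
    (∀ A : Set ℕ,
      AddSubmonoid.closure A =
        AddSubmonoid.closure ({fib n ^ 2, fib (n + 1) ^ 2, fib (n + 2) ^ 2} : Set ℕ) →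
      ({fib n ^ 2, fib (n + 1) ^ 2, fib (n + 2) ^ 2} : Set ℕ) ⊆ A) ∧
    ({fib n ^ 2, fib (n + 1) ^ 2, fib (n + 2) ^ 2} : Finset ℕ).card = 3 := by
  have ha : 3 ≤ fib n := fib_mono hn
  have hab : fib n < fib (n + 1) := fib_lt_fib_succ (by omega)
  have hcop : Coprime (fib n) (fib (n + 1)) := fib_coprime_fib_succ n
  rw [fib_add_two]
  set a := fib n
  set b := fib (n + 1)
  have hsq : a ^ 2 < b ^ 2 := Nat.pow_lt_pow_left hab two_ne_zero
  have hsq' : b ^ 2 < (a + b) ^ 2 := Nat.pow_lt_pow_left (by omega) two_ne_zero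
  have h₁ := notMem_closure_pair_of_lt (by positivity) hsq (hsq.trans hsq')
  have h₂ := notMem_closure_pair_of_coprime (by nlinarith) (hcop.pow 2 2) hsq'
  have h₃ := add_sq_notMem_closure_sq hcop ha hab
  refine ⟨hcop.pow 2 2, (coprime_self_add_right.mpr hcop).pow 2 2,
    (coprime_add_self_right.mpr hcop.symm).pow 2 2, ?_, ?_, ?_,
    finite_setOf_notMem_closure_of_coprime (by simp) (by simp) (hcop.pow 2 2),
    fun A hA ↦ triple_subset_of_closure_eq h₁ h₂ h₃ hA,
    Finset.card_eq_three.mpr ⟨_, _, _, hsq.ne, (hsq.trans hsq').ne, hsq'.ne, rfl⟩⟩ <;>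
  rwa [← mem_closure_pair_iff]
end

section
/- If n ≥ 4 is even, then f_{n+1}²·(f_n·f_{n−3} + 1) > f_{n+2}². If n ≥ 7 is odd, then f_{n+1}²·(f_n·f_{n−6} + 4) > f_{n+2}². -/
/-!
Both brackets are at least `4`, while `f_{n+2} = f_{n+1} + f_n < 2 f_{n+1}` as soon as `n ≥ 2`.
-/

open Nat

lemma Nat.fib_add_two_lt_two_mul {m : ℕ} (hm : 2 ≤ m) : fib (m + 2) < 2 * fib (m + 1) := by
  rw [fib_add_two]
  have := fib_lt_fib_succ hm
  omega

lemma Nat.fib_add_two_sq_lt_mul {m c : ℕ} (hm : 2 ≤ m) (hc : 4 ≤ c) :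
    fib (m + 2) ^ 2 < fib (m + 1) ^ 2 * c :=
  calc fib (m + 2) ^ 2 < (2 * fib (m + 1)) ^ 2 :=
        Nat.pow_lt_pow_left (fib_add_two_lt_two_mul hm) two_ne_zero
    _ = fib (m + 1) ^ 2 * 4 := by ring
    _ ≤ fib (m + 1) ^ 2 * c := Nat.mul_le_mul_left _ hc

theorem fib_sq_br_gt_cq (n : ℕ) :
    (4 ≤ n → Even n → fib (n + 1) ^ 2 * (fib n * fib (n - 3) + 1) > fib (n + 2) ^ 2) ∧
    (7 ≤ n → Odd n → fib (n + 1) ^ 2 * (fib n * fib (n - 6) + 4) > fib (n + 2) ^ 2) := by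
  refine ⟨fun hn _ => fib_add_two_sq_lt_mul (by omega) ?_,
    fun hn _ => fib_add_two_sq_lt_mul (by omega) (Nat.le_add_left _ _)⟩
  have h_fib_n : 3 ≤ fib n := fib_mono (a := 4) hn
  have h_fib_sub : 1 ≤ fib (n - 3) := fib_mono (a := 1) (by omega)
  nlinarith
end

section
/- If n ≥ 8 is even, then f_n² − (f_n·f_{n−3} + 1) = 3·(f_n·f_{n−3} + 1) + (f_n·f_{n−6} − 4) with 0 < f_n·f_{n−6} − 4 < f_n·f_{n−3} + 1; in particular the residue of f_n² − (f_n·f_{n−3} + 1) modulo f_n·f_{n−3} + 1 is f_n·f_{n−6} − 4. If n ≥ 11 is odd, then f_n² − (2·f_n·f_{n−2} + 1) = 4·(f_n·f_{n−6} + 4) + (f_n·f_{n−9} − 17) with 0 < f_n·f_{n−9} − 17 < f_n·f_{n−6} + 4; in particular the residue of f_n² − (2·f_n·f_{n−2} + 1) modulo f_n·f_{n−6} + 4 is f_n·f_{n−9} − 17. -/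
/-!
With `n = k + 6`, the identity `f_{k+6} = 4 f_{k+3} + f_k` multiplied by `f_n` is exactly the even
division identity; likewise `f_{k+9} = 2 f_{k+7} + 4 f_{k+3} + f_k` (which follows from it, since
`f_{k+9} = 2 f_{k+7} + f_{k+6}`) gives the odd one with `n = k + 9`. The remainder bounds only need
`f_n ≥ f_8 = 21` (resp. `f_n ≥ f_11 = 89`), `f_k ≥ 1` and monotonicity of `fib`.
-/

open Nat

theorem Nat.fib_add_six (k : ℕ) : fib (k + 6) = 4 * fib (k + 3) + fib k := by
  simp only [fib_add_two]
  omega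

theorem Nat.fib_add_nine (k : ℕ) : fib (k + 9) = 2 * fib (k + 7) + 4 * fib (k + 3) + fib k := by
  rw [fib_add_two, fib_add_two (n := k + 6), fib_add_six k]
  ring

theorem Int.emod_eq_of_eq_mul_add {x d q r : ℤ} (h : x = q * d + r) (hr : 0 ≤ r) (hrd : r < d) :
    x % d = r :=
  ((Int.ediv_emod_unique (q := q) (hr.trans_lt hrd)).2 ⟨by rw [h]; ring, hr, hrd⟩).2

theorem fib_sq_euclidean_step_of_even (n : ℕ) (hn : 8 ≤ n) :
    (fib n : ℤ) ^ 2 - ((fib n : ℤ) * (fib (n - 3) : ℤ) + 1) =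
        3 * ((fib n : ℤ) * (fib (n - 3) : ℤ) + 1) + ((fib n : ℤ) * (fib (n - 6) : ℤ) - 4) ∧
      0 < (fib n : ℤ) * (fib (n - 6) : ℤ) - 4 ∧
      (fib n : ℤ) * (fib (n - 6) : ℤ) - 4 < (fib n : ℤ) * (fib (n - 3) : ℤ) + 1 ∧
      ((fib n : ℤ) ^ 2 - ((fib n : ℤ) * (fib (n - 3) : ℤ) + 1)) %
          ((fib n : ℤ) * (fib (n - 3) : ℤ) + 1) =
        (fib n : ℤ) * (fib (n - 6) : ℤ) - 4 := by
  obtain ⟨k, rfl⟩ : ∃ k, n = k + 6 := ⟨n - 6, by omega⟩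
  simp only [show k + 6 - 3 = k + 3 by omega, Nat.add_sub_cancel]
  have hrec : (fib (k + 6) : ℤ) = 4 * fib (k + 3) + fib k := mod_cast fib_add_six k
  have hF : (21 : ℤ) ≤ fib (k + 6) := mod_cast (fib_mono (by omega : 8 ≤ k + 6) :)
  have ht : (1 : ℤ) ≤ fib k := mod_cast fib_pos.2 (by omega)
  have hts : (fib k : ℤ) ≤ fib (k + 3) := mod_cast fib_mono (by omega)
  have hdiv : (fib (k + 6) : ℤ) ^ 2 - (fib (k + 6) * fib (k + 3) + 1) =
      3 * (fib (k + 6) * fib (k + 3) + 1) + (fib (k + 6) * fib k - 4) := by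
    linear_combination (fib (k + 6) : ℤ) * hrec
  have hr : 0 < (fib (k + 6) : ℤ) * fib k - 4 := by nlinarith
  have hrd : (fib (k + 6) : ℤ) * fib k - 4 < fib (k + 6) * fib (k + 3) + 1 := by nlinarith
  exact ⟨hdiv, hr, hrd, Int.emod_eq_of_eq_mul_add hdiv hr.le hrd⟩

theorem fib_sq_euclidean_step_of_odd (n : ℕ) (hn : 11 ≤ n) :
    (fib n : ℤ) ^ 2 - (2 * (fib n : ℤ) * (fib (n - 2) : ℤ) + 1) =
        4 * ((fib n : ℤ) * (fib (n - 6) : ℤ) + 4) + ((fib n : ℤ) * (fib (n - 9) : ℤ) - 17) ∧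
      0 < (fib n : ℤ) * (fib (n - 9) : ℤ) - 17 ∧
      (fib n : ℤ) * (fib (n - 9) : ℤ) - 17 < (fib n : ℤ) * (fib (n - 6) : ℤ) + 4 ∧
      ((fib n : ℤ) ^ 2 - (2 * (fib n : ℤ) * (fib (n - 2) : ℤ) + 1)) %
          ((fib n : ℤ) * (fib (n - 6) : ℤ) + 4) =
        (fib n : ℤ) * (fib (n - 9) : ℤ) - 17 := by
  obtain ⟨k, rfl⟩ : ∃ k, n = k + 9 := ⟨n - 9, by omega⟩
  simp only [show k + 9 - 2 = k + 7 by omega, show k + 9 - 6 = k + 3 by omega, Nat.add_sub_cancel]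
  have hrec : (fib (k + 9) : ℤ) = 2 * fib (k + 7) + 4 * fib (k + 3) + fib k :=
    mod_cast fib_add_nine k
  have hF : (89 : ℤ) ≤ fib (k + 9) := mod_cast (fib_mono (by omega : 11 ≤ k + 9) :)
  have ht : (1 : ℤ) ≤ fib k := mod_cast fib_pos.2 (by omega)
  have hts : (fib k : ℤ) ≤ fib (k + 3) := mod_cast fib_mono (by omega)
  have hdiv : (fib (k + 9) : ℤ) ^ 2 - (2 * fib (k + 9) * fib (k + 7) + 1) =
      4 * (fib (k + 9) * fib (k + 3) + 4) + (fib (k + 9) * fib k - 17) := by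
    linear_combination (fib (k + 9) : ℤ) * hrec
  have hr : 0 < (fib (k + 9) : ℤ) * fib k - 17 := by nlinarith
  have hrd : (fib (k + 9) : ℤ) * fib k - 17 < fib (k + 9) * fib (k + 3) + 4 := by nlinarith
  exact ⟨hdiv, hr, hrd, Int.emod_eq_of_eq_mul_add hdiv hr.le hrd⟩

theorem fib_sq_euclidean_step (n : ℕ) :
    (8 ≤ n → Even n →
      (fib n : ℤ) ^ 2 - ((fib n : ℤ) * (fib (n - 3) : ℤ) + 1) =
        3 * ((fib n : ℤ) * (fib (n - 3) : ℤ) + 1) + ((fib n : ℤ) * (fib (n - 6) : ℤ) - 4) ∧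
      0 < (fib n : ℤ) * (fib (n - 6) : ℤ) - 4 ∧
      (fib n : ℤ) * (fib (n - 6) : ℤ) - 4 < (fib n : ℤ) * (fib (n - 3) : ℤ) + 1 ∧
      ((fib n : ℤ) ^ 2 - ((fib n : ℤ) * (fib (n - 3) : ℤ) + 1)) %
          ((fib n : ℤ) * (fib (n - 3) : ℤ) + 1) =
        (fib n : ℤ) * (fib (n - 6) : ℤ) - 4) ∧
    (11 ≤ n → Odd n →
      (fib n : ℤ) ^ 2 - (2 * (fib n : ℤ) * (fib (n - 2) : ℤ) + 1) =
        4 * ((fib n : ℤ) * (fib (n - 6) : ℤ) + 4) + ((fib n : ℤ) * (fib (n - 9) : ℤ) - 17) ∧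
      0 < (fib n : ℤ) * (fib (n - 9) : ℤ) - 17 ∧
      (fib n : ℤ) * (fib (n - 9) : ℤ) - 17 < (fib n : ℤ) * (fib (n - 6) : ℤ) + 4 ∧
      ((fib n : ℤ) ^ 2 - (2 * (fib n : ℤ) * (fib (n - 2) : ℤ) + 1)) %
          ((fib n : ℤ) * (fib (n - 6) : ℤ) + 4) =
        (fib n : ℤ) * (fib (n - 9) : ℤ) - 17) :=
  ⟨fun hn _ => fib_sq_euclidean_step_of_even n hn, fun hn _ => fib_sq_euclidean_step_of_odd n hn⟩
end
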